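/- The Hopf map π : ℝ⁸ = ℍ×ℍ → ℝ⁵ = ℍ×ℝ, π(z₁,z₂) := (2·conj(z₁)·z₂, |z₁|² − |z₂|²), satisfies: (i) each of its five real component functions is a harmonic polynomial on ℝ⁸, i.e. Δπ^γ ≡ 0 for γ = 1,…,5; (ii) |π(z₁,z₂)| = |z₁|² + |z₂|² for all (z₁,z₂) ∈ ℍ×ℍ; and (iii) at every point z ∈ ℝ⁸, the total derivative Dπ(z) : ℝ⁸ → ℝ⁵ satisfies Dπ(z) ∘ Dπ(z)* = 4(|z₁|²+|z₂|²)·id_{ℝ⁵}, where Dπ(z)* is the adjoint with respect to the Euclidean inner products; in particular π is horizontally conformal with dilation λ(z) = 2·‖z‖. -/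

import Mathlib

/-- The Laplacian (trace of the second derivative) of a real-valued function on a
finite-dimensional Euclidean space, computed in the standard orthonormal coordinates. -/
noncomputable def lap {ι : Type*} [Fintype ι] [DecidableEq ι]
    (u : EuclideanSpace ℝ ι → ℝ) (x : EuclideanSpace ℝ ι) : ℝ :=
  ∑ i, iteratedFDeriv ℝ 2 u x ![EuclideanSpace.single i 1, EuclideanSpace.single i 1]

/-- The first quaternion coordinate of a point of ℝ⁸ = ℍ×ℍ. -/
def quat1 (x : EuclideanSpace ℝ (Fin 8)) : Quaternion ℝ := ⟨x 0, x 1, x 2, x 3⟩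

/-- The second quaternion coordinate of a point of ℝ⁸ = ℍ×ℍ. -/
def quat2 (x : EuclideanSpace ℝ (Fin 8)) : Quaternion ℝ := ⟨x 4, x 5, x 6, x 7⟩

/-- The Hopf map π : ℝ⁸ = ℍ×ℍ → ℝ⁵ = ℍ×ℝ, π(z₁,z₂) = (2·conj(z₁)·z₂, |z₁|² − |z₂|²). -/
noncomputable def hopfH (x : EuclideanSpace ℝ (Fin 8)) : EuclideanSpace ℝ (Fin 5) :=
  WithLp.toLp 2 ![(2 * star (quat1 x) * quat2 x).re,
    (2 * star (quat1 x) * quat2 x).imI,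
    (2 * star (quat1 x) * quat2 x).imJ,
    (2 * star (quat1 x) * quat2 x).imK,
    ‖quat1 x‖ ^ 2 - ‖quat2 x‖ ^ 2]

/-!
Each component of π is a quadratic form `x ↦ ⟪x, P γ x⟫`, where `P 0, …, P 3` are the
self-adjoint maps `(z₁, z₂) ↦ (z₂ ē, z₁ e)` for `e = 1, i, j, k` and `P 4 (z₁, z₂) = (z₁, -z₂)`.
These satisfy the Clifford relations `P γ P δ + P δ P γ = 2 δ_γδ`. Hence the vectors `P γ z` are
orthogonal of length `‖z‖`, and since `Dπ(z) v = (2 ⟪P γ z, v⟫)_γ` this gives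
`Dπ(z) Dπ(z)* = 4 ‖z‖²`. The Laplacian of `⟪x, P x⟫` is `2 tr P`, and `tr (P γ) = 0` because
`P γ` anticommutes with the involution `P δ` for any `δ ≠ γ`. Finally
`|2 z̄₁ z₂|² + (|z₁|² - |z₂|²)² = (|z₁|² + |z₂|²)²` by multiplicativity of the quaternion norm.
-/

open scoped InnerProductSpace Quaternion Laplacian

theorem LinearMap.trace_eq_zero_of_anticomm {R M : Type*} [CommRing R] [IsDomain R] [CharZero R]
    [AddCommGroup M] [Module R M] [Module.Free R M] [Module.Finite R M]
    {A B : Module.End R M} (hAB : A * B = -(B * A)) (hB : B * B = 1) :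
    LinearMap.trace R M A = 0 := by
  have : LinearMap.trace R M A = -LinearMap.trace R M A := calc
    LinearMap.trace R M A = LinearMap.trace R M (A * B * B) := by rw [mul_assoc, hB, mul_one]
    _ = LinearMap.trace R M (B * (A * B)) := LinearMap.trace_mul_comm R _ _
    _ = -LinearMap.trace R M A := by rw [hAB, mul_neg, map_neg, ← mul_assoc, hB, one_mul]
  exact self_eq_neg.mp this

section QuadraticMaps

variable {E : Type*} [NormedAddCommGroup E] [InnerProductSpace ℝ E]

theorem hasFDerivAt_inner_self_apply {A : E →L[ℝ] E} (hA : (A : E →ₗ[ℝ] E).IsSymmetric) (x : E) :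
    HasFDerivAt (fun y => ⟪y, A y⟫_ℝ) ((2 : ℝ) • innerSL ℝ (A x)) x := by
  refine ((hasFDerivAt_id x).inner ℝ A.hasFDerivAt).congr_fderiv ?_
  ext v
  have hsymm : ⟪A x, v⟫_ℝ = ⟪x, A v⟫_ℝ := hA x v
  simp [two_smul, real_inner_comm (A x) v, hsymm]

theorem laplacian_inner_self_apply [FiniteDimensional ℝ E] {A : E →L[ℝ] E}
    (hA : (A : E →ₗ[ℝ] E).IsSymmetric) (x : E) :
    Δ (fun y => ⟪y, A y⟫_ℝ) x = 2 * LinearMap.trace ℝ E A := by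
  have hf : fderiv ℝ (fun y => ⟪y, A y⟫_ℝ) = ((2 : ℝ) • (innerSL ℝ ∘L A) : E →L[ℝ] E →L[ℝ] ℝ) :=
    funext fun y => (hasFDerivAt_inner_self_apply hA y).fderiv
  let b := stdOrthonormalBasis ℝ E
  rw [InnerProductSpace.laplacian_eq_iteratedFDeriv_orthonormalBasis _ b,
    LinearMap.trace_eq_sum_inner _ b, Finset.mul_sum]
  simp only [iteratedFDeriv_two_apply, hf, ContinuousLinearMap.fderiv]
  refine Finset.sum_congr rfl fun i _ => ?_
  rw [real_inner_comm]
  rfl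

variable {ι : Type*}

noncomputable def quadMap (P : ι → E →L[ℝ] E) (x : E) : EuclideanSpace ℝ ι :=
  WithLp.toLp 2 fun γ => ⟪x, P γ x⟫_ℝ

noncomputable def quadMapDeriv [Fintype ι] (P : ι → E →L[ℝ] E) (z : E) :
    E →L[ℝ] EuclideanSpace ℝ ι :=
  (PiLp.continuousLinearEquiv 2 ℝ (fun _ : ι => ℝ)).symm.toContinuousLinearMap ∘L
    ContinuousLinearMap.pi fun γ => (2 : ℝ) • innerSL ℝ (P γ z)

variable {P : ι → E →L[ℝ] E}

@[simp]
theorem quadMapDeriv_apply [Fintype ι] (z v : E) (γ : ι) :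
    quadMapDeriv P z v γ = 2 * ⟪P γ z, v⟫_ℝ :=
  rfl

theorem hasFDerivAt_quadMap [Fintype ι] (hP : ∀ γ, (P γ : E →ₗ[ℝ] E).IsSymmetric) (z : E) :
    HasFDerivAt (quadMap P) (quadMapDeriv P z) z :=
  (PiLp.hasFDerivAt_toLp 2 _).comp z
    (hasFDerivAt_pi.2 fun γ => hasFDerivAt_inner_self_apply (hP γ) z)

theorem adjoint_quadMapDeriv_apply [Fintype ι] [CompleteSpace E] (z : E)
    (y : EuclideanSpace ℝ ι) :
    (quadMapDeriv P z).adjoint y = (2 : ℝ) • ∑ γ, y γ • P γ z := by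
  refine ext_inner_right ℝ fun v => ?_
  simp only [ContinuousLinearMap.adjoint_inner_left, PiLp.inner_apply, quadMapDeriv_apply,
    real_inner_smul_left, sum_inner, Finset.mul_sum, RCLike.inner_apply, conj_trivial]
  exact Finset.sum_congr rfl fun γ _ => by ring

theorem quadMapDeriv_comp_adjoint [Fintype ι] [DecidableEq ι] [CompleteSpace E] {z : E}
    (h : ∀ γ δ, ⟪P γ z, P δ z⟫_ℝ = if γ = δ then ‖z‖ ^ 2 else 0) :
    quadMapDeriv P z ∘L (quadMapDeriv P z).adjoint =
      (4 * ‖z‖ ^ 2) • ContinuousLinearMap.id ℝ (EuclideanSpace ℝ ι) := by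
  ext y γ
  simp [adjoint_quadMapDeriv_apply, h]
  ring

structure IsCliffordSystem (P : ι → E →L[ℝ] E) : Prop where
  isSymmetric (γ : ι) : (P γ : E →ₗ[ℝ] E).IsSymmetric
  mul_self (γ : ι) : P γ * P γ = 1
  anticomm {γ δ : ι} : γ ≠ δ → P γ * P δ = -(P δ * P γ)

namespace IsCliffordSystem

variable (hP : IsCliffordSystem P)
include hP

theorem inner_apply_apply [DecidableEq ι] (z : E) (γ δ : ι) :
    ⟪P γ z, P δ z⟫_ℝ = if γ = δ then ‖z‖ ^ 2 else 0 := by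
  have hmove (α β : ι) : ⟪P α z, P β z⟫_ℝ = ⟪z, (P α * P β) z⟫_ℝ := hP.isSymmetric α z (P β z)
  split_ifs with h
  · rw [h, hmove, hP.mul_self, one_apply_eq_self, real_inner_self_eq_norm_sq]
  · have hanti : ⟪P γ z, P δ z⟫_ℝ = -⟪P δ z, P γ z⟫_ℝ := by
      rw [hmove, hmove, hP.anticomm h, neg_apply, inner_neg_right]
    linarith [real_inner_comm (P γ z) (P δ z)]

theorem trace_eq_zero [FiniteDimensional ℝ E] {γ δ : ι} (h : γ ≠ δ) :
    LinearMap.trace ℝ E (P γ) = 0 :=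
  LinearMap.trace_eq_zero_of_anticomm (B := (P δ : E →ₗ[ℝ] E))
    (by rw [← ContinuousLinearMap.toLinearMap_mul, hP.anticomm h]; rfl)
    (by rw [← ContinuousLinearMap.toLinearMap_mul, hP.mul_self]; rfl)

theorem laplacian_quadMap_apply [FiniteDimensional ℝ E] [Nontrivial ι] (γ : ι) (z : E) :
    Δ (fun x => quadMap P x γ) z = 0 := by
  obtain ⟨δ, hδ⟩ := exists_ne γ
  rw [show (fun x => quadMap P x γ) = fun x => ⟪x, P γ x⟫_ℝ from rfl,
    laplacian_inner_self_apply (hP.isSymmetric γ), hP.trace_eq_zero hδ.symm, mul_zero]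

theorem fderiv_quadMap_comp_adjoint [Fintype ι] [CompleteSpace E] (z : E) :
    fderiv ℝ (quadMap P) z ∘L (fderiv ℝ (quadMap P) z).adjoint =
      (4 * ‖z‖ ^ 2) • ContinuousLinearMap.id ℝ (EuclideanSpace ℝ ι) := by
  classical
  rw [(hasFDerivAt_quadMap hP.isSymmetric z).fderiv]
  exact quadMapDeriv_comp_adjoint (hP.inner_apply_apply z)

end IsCliffordSystem

end QuadraticMaps

theorem lap_eq_laplacian {ι : Type*} [Fintype ι] [DecidableEq ι] (u : EuclideanSpace ℝ ι → ℝ) :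
    lap u = Δ u := by
  rw [InnerProductSpace.laplacian_eq_iteratedFDeriv_orthonormalBasis u
    (EuclideanSpace.basisFun ι ℝ)]
  simp only [EuclideanSpace.basisFun_apply]
  rfl

namespace Quaternion

theorem inner_mul_star_left (a b q : ℍ) : ⟪a * star q, b⟫_ℝ = ⟪a, b * q⟫_ℝ := by
  simp [inner_def, mul_assoc]

theorem mul_star_add_mul_star (p q : ℍ) : q * star p + p * star q = (2 * ⟪p, q⟫_ℝ : ℝ) := by
  ext <;> simp [inner_def] <;> ring

theorem star_mul_add_star_mul (p q : ℍ) : star q * p + star p * q = (2 * ⟪p, q⟫_ℝ : ℝ) := by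
  ext <;> simp [inner_def] <;> ring

end Quaternion

local notation "ℝ⁸" => EuclideanSpace ℝ (Fin 8)

def ofQuat (p q : ℍ) : ℝ⁸ := !₂[p.re, p.imI, p.imJ, p.imK, q.re, q.imI, q.imJ, q.imK]

@[simp] theorem quat1_ofQuat (p q : ℍ) : quat1 (ofQuat p q) = p := rfl
@[simp] theorem quat2_ofQuat (p q : ℍ) : quat2 (ofQuat p q) = q := rfl

theorem ofQuat_quat1_quat2 (x : ℝ⁸) : ofQuat (quat1 x) (quat2 x) = x := by
  ext i; fin_cases i <;> rfl

@[simp] theorem quat1_neg (x : ℝ⁸) : quat1 (-x) = -quat1 x := rfl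
@[simp] theorem quat2_neg (x : ℝ⁸) : quat2 (-x) = -quat2 x := rfl
@[simp] theorem quat1_smul (c : ℝ) (x : ℝ⁸) : quat1 (c • x) = c • quat1 x := rfl
@[simp] theorem quat2_smul (c : ℝ) (x : ℝ⁸) : quat2 (c • x) = c • quat2 x := rfl

theorem ext_quat {x y : ℝ⁸} (h₁ : quat1 x = quat1 y) (h₂ : quat2 x = quat2 y) : x = y := by
  rw [← ofQuat_quat1_quat2 x, ← ofQuat_quat1_quat2 y, h₁, h₂]

noncomputable def quatEquiv : ℝ⁸ ≃ₗ[ℝ] ℍ × ℍ where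
  toFun x := (quat1 x, quat2 x)
  invFun p := ofQuat p.1 p.2
  map_add' _ _ := rfl
  map_smul' _ _ := rfl
  left_inv := ofQuat_quat1_quat2
  right_inv _ := rfl

theorem inner_eq_inner_quat (x y : ℝ⁸) :
    ⟪x, y⟫_ℝ = ⟪quat1 x, quat1 y⟫_ℝ + ⟪quat2 x, quat2 y⟫_ℝ := by
  rw [Quaternion.inner_def, Quaternion.inner_def]
  simp [PiLp.inner_apply, Fin.sum_univ_eight]
  simp [quat1, quat2]
  ring

theorem norm_sq_eq_quat (x : ℝ⁸) : ‖x‖ ^ 2 = ‖quat1 x‖ ^ 2 + ‖quat2 x‖ ^ 2 := by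
  simpa only [real_inner_self_eq_norm_sq] using inner_eq_inner_quat x x

noncomputable def swapMulRight (q : ℍ) : ℝ⁸ →L[ℝ] ℝ⁸ :=
  LinearMap.toContinuousLinearMap <| quatEquiv.symm.toLinearMap ∘ₗ
    ((LinearMap.mulRight ℝ (star q) ∘ₗ LinearMap.snd ℝ ℍ ℍ).prod
      (LinearMap.mulRight ℝ q ∘ₗ LinearMap.fst ℝ ℍ ℍ)) ∘ₗ quatEquiv.toLinearMap

@[simp] theorem swapMulRight_apply (q : ℍ) (x : ℝ⁸) :
    swapMulRight q x = ofQuat (quat2 x * star q) (quat1 x * q) := rfl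

noncomputable def negSnd : ℝ⁸ →L[ℝ] ℝ⁸ :=
  LinearMap.toContinuousLinearMap <| quatEquiv.symm.toLinearMap ∘ₗ
    (LinearMap.prodMap LinearMap.id (-LinearMap.id)) ∘ₗ quatEquiv.toLinearMap

@[simp] theorem negSnd_apply (x : ℝ⁸) : negSnd x = ofQuat (quat1 x) (-quat2 x) := rfl

theorem isSymmetric_swapMulRight (q : ℍ) : (swapMulRight q : ℝ⁸ →ₗ[ℝ] ℝ⁸).IsSymmetric := by
  intro x y
  simp only [ContinuousLinearMap.coe_coe, swapMulRight_apply, inner_eq_inner_quat, quat1_ofQuat,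
    quat2_ofQuat, Quaternion.inner_mul_star_left]
  rw [real_inner_comm (quat2 y * star q) (quat1 x), Quaternion.inner_mul_star_left,
    real_inner_comm (quat2 y) (quat1 x * q), add_comm]

theorem isSymmetric_negSnd : (negSnd : ℝ⁸ →ₗ[ℝ] ℝ⁸).IsSymmetric := by
  intro x y
  simp [inner_eq_inner_quat]

theorem swapMulRight_mul_self (q : ℍ) : swapMulRight q * swapMulRight q = (‖q‖ ^ 2) • 1 := by
  ext1 x
  refine ext_quat ?_ ?_ <;> simp [mul_assoc, Quaternion.self_mul_star, Quaternion.star_mul_self]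
  all_goals rw [Quaternion.mul_coe_eq_smul, Quaternion.normSq_eq_norm_mul_self, sq]

theorem negSnd_mul_self : negSnd * negSnd = 1 := by
  ext1 x
  exact ext_quat rfl (neg_neg (quat2 x))

theorem swapMulRight_anticomm {p q : ℍ} (h : ⟪p, q⟫_ℝ = 0) :
    swapMulRight p * swapMulRight q = -(swapMulRight q * swapMulRight p) := by
  ext1 x
  have h₁ : q * star p = -(p * star q) := by
    rw [eq_neg_iff_add_eq_zero, Quaternion.mul_star_add_mul_star, h, mul_zero, Quaternion.coe_zero]
  have h₂ : star q * p = -(star p * q) := by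
    rw [eq_neg_iff_add_eq_zero, Quaternion.star_mul_add_star_mul, h, mul_zero, Quaternion.coe_zero]
  refine ext_quat ?_ ?_ <;> simp [mul_assoc, h₁, h₂]

theorem swapMulRight_negSnd_anticomm (q : ℍ) :
    swapMulRight q * negSnd = -(negSnd * swapMulRight q) := by
  ext1 x
  refine ext_quat ?_ ?_ <;> simp

theorem isCliffordSystem_snoc {n : ℕ} {u : Fin n → ℍ} (hu : Orthonormal ℝ u) :
    IsCliffordSystem (Fin.snoc (α := fun _ => ℝ⁸ →L[ℝ] ℝ⁸) (fun i => swapMulRight (u i)) negSnd)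
    where
  isSymmetric γ := by
    induction γ using Fin.lastCases with
    | last => simpa using isSymmetric_negSnd
    | cast i => simpa using isSymmetric_swapMulRight (u i)
  mul_self γ := by
    induction γ using Fin.lastCases with
    | last => simpa using negSnd_mul_self
    | cast i => simpa [hu.1 i] using swapMulRight_mul_self (u i)
  anticomm {γ δ} h := by
    induction γ using Fin.lastCases with
    | last =>
      induction δ using Fin.lastCases with
      | last => exact absurd rfl h
      | cast j => simp [swapMulRight_negSnd_anticomm (u j)]
    | cast i =>
      induction δ using Fin.lastCases with
      | last => simpa using swapMulRight_negSnd_anticomm (u i)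
      | cast j => simpa using swapMulRight_anticomm (hu.2 fun hij => h (congrArg _ hij))

-- the basis `1, i, j, k`
noncomputable def quatBasis : OrthonormalBasis (Fin 4) ℝ ℍ :=
  (EuclideanSpace.basisFun (Fin 4) ℝ).map Quaternion.linearIsometryEquivTuple.symm

noncomputable def hopfSystem : Fin 5 → ℝ⁸ →L[ℝ] ℝ⁸ :=
  Fin.snoc (α := fun _ => ℝ⁸ →L[ℝ] ℝ⁸) (fun i => swapMulRight (quatBasis i)) negSnd

theorem inner_quatBasis (i : Fin 4) (w : ℍ) :
    ⟪quatBasis i, w⟫_ℝ = ![w.re, w.imI, w.imJ, w.imK] i := by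
  rw [← OrthonormalBasis.repr_apply_apply]
  simp [quatBasis]
  rfl

theorem hopfSystem_castSucc (i : Fin 4) :
    hopfSystem i.castSucc = swapMulRight (quatBasis i) :=
  Fin.snoc_castSucc (α := fun _ => ℝ⁸ →L[ℝ] ℝ⁸) ..

theorem hopfSystem_last : hopfSystem (Fin.last 4) = negSnd :=
  Fin.snoc_last (α := fun _ => ℝ⁸ →L[ℝ] ℝ⁸) ..

theorem inner_swapMulRight_self (q : ℍ) (x : ℝ⁸) :
    ⟪x, swapMulRight q x⟫_ℝ = 2 * ⟪q, star (quat1 x) * quat2 x⟫_ℝ := by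
  simp only [inner_eq_inner_quat, swapMulRight_apply, quat1_ofQuat, quat2_ofQuat,
    Quaternion.inner_def]
  simp
  ring

theorem hopfH_eq_quadMap : hopfH = quadMap hopfSystem := by
  have h2 : (2 : ℍ) = ((2 : ℝ) : ℍ) := rfl
  funext x
  ext γ
  induction γ using Fin.lastCases with
  | last =>
    simp only [quadMap, PiLp.toLp_apply, hopfSystem_last, inner_eq_inner_quat, negSnd_apply,
      quat1_ofQuat, quat2_ofQuat, inner_neg_right, real_inner_self_eq_norm_sq]
    rfl
  | cast i =>
    simp only [quadMap, PiLp.toLp_apply, hopfSystem_castSucc, inner_swapMulRight_self,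
      inner_quatBasis]
    fin_cases i <;> simp [hopfH, h2, Quaternion.coe_mul_eq_smul]

theorem norm_hopfH (z : ℝ⁸) : ‖hopfH z‖ = ‖quat1 z‖ ^ 2 + ‖quat2 z‖ ^ 2 := by
  have hsum : ‖hopfH z‖ ^ 2 =
      ‖2 * star (quat1 z) * quat2 z‖ ^ 2 + (‖quat1 z‖ ^ 2 - ‖quat2 z‖ ^ 2) ^ 2 := by
    rw [EuclideanSpace.norm_sq_eq, Fin.sum_univ_five, sq ‖2 * star (quat1 z) * quat2 z‖,
      ← Quaternion.normSq_eq_norm_mul_self, Quaternion.normSq_def']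
    simp [hopfH]
  have hprod : ‖2 * star (quat1 z) * quat2 z‖ = 2 * ‖quat1 z‖ * ‖quat2 z‖ := by
    have h2 : ((2 : ℝ) : ℍ) = 2 := rfl
    rw [norm_mul, norm_mul, norm_star, ← h2, Quaternion.norm_coe, Real.norm_ofNat]
  rw [← sq_eq_sq₀ (norm_nonneg _) (by positivity), hsum, hprod]
  ring

/-- the Hopf map ℝ⁸ → ℝ⁵ has harmonic components, satisfies
|π(z)| = |z₁|² + |z₂|², and is horizontally conformal with
Dπ(z) ∘ Dπ(z)* = 4(|z₁|²+|z₂|²)·id, i.e. dilation λ(z) = 2‖z‖. -/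
theorem stmt_19 :
    (∀ γ : Fin 5, ∀ z : EuclideanSpace ℝ (Fin 8), lap (fun w => hopfH w γ) z = 0) ∧
    (∀ z : EuclideanSpace ℝ (Fin 8), ‖hopfH z‖ = ‖quat1 z‖ ^ 2 + ‖quat2 z‖ ^ 2) ∧
    (∀ z : EuclideanSpace ℝ (Fin 8),
      (fderiv ℝ hopfH z).comp (ContinuousLinearMap.adjoint (fderiv ℝ hopfH z)) =
        (4 * (‖quat1 z‖ ^ 2 + ‖quat2 z‖ ^ 2)) •
          ContinuousLinearMap.id ℝ (EuclideanSpace ℝ (Fin 5)) ∧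
      4 * (‖quat1 z‖ ^ 2 + ‖quat2 z‖ ^ 2) = (2 * ‖z‖) ^ 2) := by
  have hP : IsCliffordSystem hopfSystem := isCliffordSystem_snoc quatBasis.orthonormal
  refine ⟨fun γ z => ?_, norm_hopfH, fun z => ⟨?_, ?_⟩⟩
  · rw [lap_eq_laplacian, hopfH_eq_quadMap, hP.laplacian_quadMap_apply]
  · rw [hopfH_eq_quadMap, hP.fderiv_quadMap_comp_adjoint, norm_sq_eq_quat]
  · rw [mul_pow, norm_sq_eq_quat]
    ring
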